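/- arXiv:1502.07004 — 2 statements merged into one kernel-verified Lean document; each statement's English description precedes it below -/
import Mathlib

section
/- Let Γ be a finite group and n ≥ 1 an integer. Then the number of tuples (x₁,y₁,…,xₙ,yₙ) ∈ Γ^{2n} with [x₁,y₁]⋯[xₙ,yₙ] = 1 equals |Γ|^{2n-1} · Σ_{π ∈ Irr(Γ)} (dim π)^{-(2n-2)}. -/
/-!
Column orthogonality says that `|Γ|⁻¹ ∑_π dim π · χ_π` is the indicator function of `1`, so the
number of solutions is `|Γ|⁻¹ ∑_π dim π ∑_t χ_π([x₁,y₁]⋯[xₙ,yₙ])`, and the inner sum is the trace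
of `(∑_{x,y} π([x,y]))ⁿ`. By Schur's lemma, averaging `π(x) T π(x)⁻¹` over `x` gives the scalar
`|Γ| tr T / dim π`, and `∑_y χ_π(y) π(y⁻¹)` is the scalar `|Γ| / dim π`, its trace being `|Γ|` by
the orthogonality relations; together, `∑_{x,y} π([x,y]) = (|Γ| / dim π)²`.
Column orthogonality comes from decomposing `ℂ[Γ]` into simple left ideals: each is isomorphic to
a member of the family, and pairing the regular character `|Γ| · [g = 1]` with `χ_π` shows that
`π` occurs `dim π` times.
-/

/-- A matrix representation is irreducible: the space is nonzero and the only invariant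
subspaces are `⊥` and `⊤`. -/
def IsIrredMatRep {G : Type} [Group G] {n : ℕ}
    (ρ : G →* (Matrix (Fin n) (Fin n) ℂ)ˣ) : Prop :=
  0 < n ∧ ∀ W : Submodule ℂ (Fin n → ℂ),
    (∀ g : G, W.map (Matrix.toLin' (ρ g : Matrix (Fin n) (Fin n) ℂ)) ≤ W) → W = ⊥ ∨ W = ⊤

/-- Two matrix representations are isomorphic: there is a linear equivalence intertwining
them. -/
def MatRepIso {G : Type} [Group G] {m n : ℕ} (σ : G →* (Matrix (Fin m) (Fin m) ℂ)ˣ)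
    (ρ : G →* (Matrix (Fin n) (Fin n) ℂ)ˣ) : Prop :=
  ∃ e : (Fin m → ℂ) ≃ₗ[ℂ] (Fin n → ℂ), ∀ g : G,
    e.toLinearMap ∘ₗ Matrix.toLin' (σ g : Matrix (Fin m) (Fin m) ℂ)
      = Matrix.toLin' (ρ g : Matrix (Fin n) (Fin n) ℂ) ∘ₗ e.toLinearMap

open scoped commutatorElement

open Module LinearMap

theorem Fintype.sum_list_prod_ofFn {R β : Type*} [Semiring R] [Fintype β] (F : β → R) (n : ℕ) :
    ∑ t : Fin n → β, (List.ofFn fun i => F (t i)).prod = (∑ b, F b) ^ n := by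
  induction n with
  | zero => simp
  | succ n ih =>
    rw [← (Fin.consEquiv fun _ => β).sum_comp, Fintype.sum_prod_type, pow_succ', ← ih,
      Finset.sum_mul_sum]
    simp [Fin.consEquiv, List.ofFn_succ]

namespace Representation

section Irreducible

variable {k G V W : Type*} [Field k] [Group G] [AddCommGroup V] [Module k V] [AddCommGroup W]
  [Module k W]

theorem IsIrreducible.nontrivial (ρ : Representation k G V) [ρ.IsIrreducible] : Nontrivial V :=
  IsSimpleModule.nontrivial (MonoidAlgebra k G) ρ.asModule

theorem IsIrreducible.finrank_pos [FiniteDimensional k V] (ρ : Representation k G V)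
    [ρ.IsIrreducible] : 0 < finrank k V :=
  have := IsIrreducible.nontrivial ρ
  Module.finrank_pos

theorem Equiv.isIrreducible {ρ : Representation k G V} {σ : Representation k G W}
    (φ : ρ.Equiv σ) [ρ.IsIrreducible] : σ.IsIrreducible := by
  rw [irreducible_iff_isSimpleModule_asModule] at *
  exact IsSimpleModule.congr (LinearEquiv.ofBijective
    (IntertwiningMap.equivLinearMapAsModule σ ρ φ.symm.toIntertwiningMap) φ.symm.bijective)

variable (M : Type*) [AddCommGroup M] [Module k M] [Module (MonoidAlgebra k G) M]
  [IsScalarTower k (MonoidAlgebra k G) M]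

theorem asAlgebraHom_ofModule' :
    (ofModule' (k := k) (G := G) M).asAlgebraHom = Algebra.lsmul k k M := by
  simp [asAlgebraHom, ofModule']

theorem isIrreducible_ofModule'_iff :
    (ofModule' (k := k) (G := G) M).IsIrreducible ↔ IsSimpleModule (MonoidAlgebra k G) M := by
  rw [irreducible_iff_isSimpleModule_asModule]
  let e : (ofModule' (k := k) (G := G) M).asModule ≃ₗ[MonoidAlgebra k G] M :=
    { (ofModule' (k := k) (G := G) M).asModuleEquiv with
      map_smul' := fun a x => by simp [asModuleEquiv_map_smul, asAlgebraHom_ofModule'] }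
  exact ⟨fun _ => IsSimpleModule.congr e.symm, fun _ => IsSimpleModule.congr e⟩

end Irreducible

section Schur

variable {k G V : Type*} [Field k] [IsAlgClosed k] [CharZero k] [Group G] [AddCommGroup V]
  [Module k V] [FiniteDimensional k V] (ρ : Representation k G V) [ρ.IsIrreducible]

theorem IsIrreducible.eq_smul_one_of_commute {T : Module.End k V}
    (hT : ∀ g, ρ g * T = T * ρ g) : T = (trace k V T / finrank k V) • 1 := by
  obtain ⟨c, hc⟩ := IsIrreducible.algebraMap_intertwiningMap_bijective_of_isAlgClosed.2
    (⟨T, fun g => (hT g).symm⟩ : IntertwiningMap ρ ρ)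
  have hTc : T = c • 1 := congrArg IntertwiningMap.toLinearMap hc.symm
  have hd : (finrank k V : k) ≠ 0 := Nat.cast_ne_zero.2 (IsIrreducible.finrank_pos ρ).ne'
  rw [hTc, map_smul, trace_one, smul_eq_mul, mul_div_cancel_right₀ _ hd]

variable [Fintype G]

open Classical in
theorem sum_character_mul_character_inv {W : Type*} [AddCommGroup W] [Module k W]
    [FiniteDimensional k W] (σ : Representation k G W) [σ.IsIrreducible] :
    ∑ g, ρ.character g * σ.character g⁻¹
      = if Nonempty (σ.Equiv ρ) then (Fintype.card G : k) else 0 := by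
  have : Invertible (Nat.card G : k) := invertibleOfNonzero (by simp)
  have h := char_orthonormal ρ σ
  rw [Nat.card_eq_fintype_card, inv_mul_eq_iff_eq_mul₀ (by simp)] at h
  rw [h]
  split_ifs <;> simp

theorem sum_mul_mul_inv_eq_smul_one (T : Module.End k V) :
    ∑ g, ρ g * T * ρ g⁻¹ = (Fintype.card G * trace k V T / finrank k V) • 1 := by
  have hcomm : ∀ h, ρ h * ∑ g, ρ g * T * ρ g⁻¹ = (∑ g, ρ g * T * ρ g⁻¹) * ρ h := by
    intro h
    rw [Finset.mul_sum, Finset.sum_mul]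
    refine Fintype.sum_equiv (Equiv.mulLeft h) _ _ fun g => ?_
    have hinv : ρ h⁻¹ * ρ h = 1 := by rw [← map_mul, inv_mul_cancel, map_one]
    simp only [Equiv.coe_mulLeft, mul_inv_rev, map_mul, mul_assoc, hinv, mul_one]
  have htrace : trace k V (∑ g, ρ g * T * ρ g⁻¹) = Fintype.card G * trace k V T := by
    have hconj : ∀ g, trace k V (ρ g * T * ρ g⁻¹) = trace k V T := fun g => by
      rw [trace_mul_cycle, ← map_mul, inv_mul_cancel, map_one, one_mul]
    simp [map_sum, hconj]
  rw [IsIrreducible.eq_smul_one_of_commute ρ hcomm, htrace]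

theorem sum_character_smul_inv_eq_smul_one :
    ∑ g, ρ.character g • ρ g⁻¹ = (Fintype.card G / finrank k V : k) • 1 := by
  have hcomm : ∀ h, ρ h * ∑ g, ρ.character g • ρ g⁻¹ = (∑ g, ρ.character g • ρ g⁻¹) * ρ h := by
    intro h
    rw [Finset.mul_sum, Finset.sum_mul]
    refine Fintype.sum_equiv (MulAut.conj h).toEquiv _ _ fun g => ?_
    simp only [MulEquiv.toEquiv_eq_coe, EquivLike.coe_coe, MulAut.conj_apply, char_conj,
      mul_smul_comm, smul_mul_assoc, ← map_mul]
    congr 2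
    group
  have horth := sum_character_mul_character_inv ρ ρ
  rw [if_pos ⟨Equiv.refl ρ⟩] at horth
  have htrace : trace k V (∑ g, ρ.character g • ρ g⁻¹) = Fintype.card G := by
    simpa only [map_sum, map_smul, smul_eq_mul, character] using horth
  rw [IsIrreducible.eq_smul_one_of_commute ρ hcomm, htrace]

theorem sum_commutator_eq_smul_one :
    ∑ x : G, ∑ y : G, ρ ⁅x, y⁆ = ((Fintype.card G / finrank k V : k) ^ 2) • 1 := by
  simp_rw [commutatorElement_def, map_mul]
  rw [Finset.sum_comm]
  simp_rw [← Finset.sum_mul, sum_mul_mul_inv_eq_smul_one, smul_mul_assoc, one_mul,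
    mul_div_right_comm _ (trace k V _), ← smul_smul, ← Finset.smul_sum]
  change (_ : k) • ∑ g, ρ.character g • _ = _
  rw [sum_character_smul_inv_eq_smul_one, smul_smul, sq]

theorem sum_character_prod_commutators (n : ℕ) :
    ∑ t : Fin n → G × G, ρ.character (List.ofFn fun i => ⁅(t i).1, (t i).2⁆).prod
      = (Fintype.card G / finrank k V : k) ^ (2 * n) * finrank k V := by
  simp only [character, map_list_prod, List.map_ofFn, Function.comp_def, ← map_sum,
    Fintype.sum_list_prod_ofFn (fun p : G × G => ρ ⁅p.1, p.2⁆), Fintype.sum_prod_type,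
    sum_commutator_eq_smul_one, smul_pow, one_pow, map_smul, trace_one, smul_eq_mul, pow_mul]

end Schur

section Matrix

variable {k G V : Type*} [Field k] [Group G] [AddCommGroup V] [Module k V] {m : ℕ}

def toMatRep (ρ : Representation k G V) (e : V ≃ₗ[k] (Fin m → k)) :
    G →* (Matrix (Fin m) (Fin m) k)ˣ :=
  (Units.map ((e.conjAlgEquiv k).trans LinearMap.toMatrixAlgEquiv').toMonoidHom).comp
    ρ.asGroupHom

theorem toMatRep_apply (ρ : Representation k G V) (e : V ≃ₗ[k] (Fin m → k)) (g : G) :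
    (ρ.toMatRep e g : Matrix (Fin m) (Fin m) k) = LinearMap.toMatrix' (e.conj (ρ g)) := rfl

theorem trace_toMatRep (ρ : Representation k G V) (e : V ≃ₗ[k] (Fin m → k)) (g : G) :
    (ρ.toMatRep e g : Matrix (Fin m) (Fin m) k).trace = ρ.character g := by
  rw [toMatRep_apply, ← Matrix.trace_toLin'_eq, Matrix.toLin'_toMatrix', trace_conj',
    character]

end Matrix

end Representation

theorem card_prod_commutators_eq_one {k G ι : Type*} [Field k] [IsAlgClosed k] [CharZero k]
    [Group G] [Fintype G] [DecidableEq G] [Fintype ι] {V : ι → Type*}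
    [∀ i, AddCommGroup (V i)] [∀ i, Module k (V i)] [∀ i, FiniteDimensional k (V i)]
    (ρ : ∀ i, Representation k G (V i)) [∀ i, (ρ i).IsIrreducible]
    (hreg : ∀ g, ∑ i, (finrank k (V i) : k) * (ρ i).character g
      = if g = 1 then (Fintype.card G : k) else 0)
    {n : ℕ} (hn : 1 ≤ n) :
    (Nat.card {t : Fin n → G × G // (List.ofFn fun i => ⁅(t i).1, (t i).2⁆).prod = 1} : k)
      = Fintype.card G ^ (2 * n - 1) * ∑ i, ((finrank k (V i) : k) ^ (2 * n - 2))⁻¹ := by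
  obtain ⟨m, rfl⟩ : ∃ m, n = m + 1 := ⟨n - 1, by omega⟩
  set w : (Fin (m + 1) → G × G) → G := fun t => (List.ofFn fun i => ⁅(t i).1, (t i).2⁆).prod
  have hG : (Fintype.card G : k) ≠ 0 := by simp
  calc (Nat.card {t // w t = 1} : k)
      = ∑ t, if w t = 1 then 1 else 0 := by
        rw [Finset.sum_boole, Nat.card_eq_fintype_card, Fintype.card_subtype]
    _ = ∑ t, (Fintype.card G : k)⁻¹ * ∑ i, (finrank k (V i) : k) * (ρ i).character (w t) := by
        simp only [hreg, mul_ite, mul_zero, inv_mul_cancel₀ hG]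
    _ = (Fintype.card G : k)⁻¹ *
          ∑ i, (finrank k (V i) : k) * ((Fintype.card G / finrank k (V i) : k) ^ (2 * (m + 1)) *
            finrank k (V i)) := by
        simp only [← Finset.mul_sum]
        rw [Finset.sum_comm]
        simp only [← Finset.mul_sum, w, Representation.sum_character_prod_commutators]
    _ = _ := by
        rw [Finset.mul_sum, Finset.mul_sum]
        refine Finset.sum_congr rfl fun i _ => ?_
        have hd : (finrank k (V i) : k) ≠ 0 :=
          Nat.cast_ne_zero.2 (Representation.IsIrreducible.finrank_pos (ρ i)).ne'
        rw [show 2 * (m + 1) - 1 = 2 * m + 1 by omega, show 2 * (m + 1) - 2 = 2 * m by omega,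
          div_pow]
        field_simp
        ring

open Finset in
theorem sum_apply_one_mul_eq_of_orthogonal {k G ι κ : Type*} [Field k] [CharZero k] [Group G]
    [Fintype G] [DecidableEq G] [Fintype ι] [DecidableEq ι] [Fintype κ] {χ : ι → G → k}
    (horth : ∀ i j, ∑ g, χ i g * χ j g⁻¹ = if i = j then (Fintype.card G : k) else 0)
    (c : κ → ι) (hreg : ∀ g, ∑ S, χ (c S) g = if g = 1 then (Fintype.card G : k) else 0)
    (g : G) : ∑ i, χ i 1 * χ i g = if g = 1 then (Fintype.card G : k) else 0 := by
  have hG : (Fintype.card G : k) ≠ 0 := by simp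
  have hmult : ∀ i, χ i 1 = #{S | c S = i} := fun i => by
    apply mul_left_cancel₀ hG
    calc (Fintype.card G : k) * χ i 1
        = ∑ g, (if g = 1 then (Fintype.card G : k) else 0) * χ i g⁻¹ := by simp
      _ = ∑ S, ∑ g, χ (c S) g * χ i g⁻¹ := by
        simp only [← hreg, sum_mul]
        exact sum_comm
      _ = Fintype.card G * #{S | c S = i} := by
        simp [horth, sum_ite, mul_comm]
  calc ∑ i, χ i 1 * χ i g = ∑ i, ∑ S with c S = i, χ (c S) g := by
        refine sum_congr rfl fun i _ => ?_
        rw [hmult, sum_congr rfl fun S hS => by rw [(mem_filter.1 hS).2], sum_const,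
          nsmul_eq_mul]
    _ = ∑ S, χ (c S) g := sum_fiberwise _ _ _
    _ = _ := hreg g

theorem MonoidAlgebra.trace_mulLeft_of {k G : Type*} [Field k] [Group G] [Fintype G]
    [DecidableEq G] (g : G) :
    trace k (MonoidAlgebra k G) (mulLeft k (of k G g))
      = if g = 1 then (Fintype.card G : k) else 0 := by
  rw [trace_eq_matrix_trace k (basis G k), Matrix.trace]
  have hdiag : ∀ h, (toMatrix (basis G k) (basis G k) (mulLeft k (of k G g))).diag h
      = if g = 1 then 1 else 0 := fun h => by
    rw [Matrix.diag_apply, toMatrix_apply, mulLeft_apply, basis_apply, of_apply,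
      single_mul_single, one_mul]
    simp [basis, Finsupp.single_apply]
  rw [Finset.sum_congr rfl fun h _ => hdiag h]
  split_ifs <;> simp

namespace MatRep

variable {G : Type} [Group G] {n : ℕ}

def toRepresentation (ρ : G →* (Matrix (Fin n) (Fin n) ℂ)ˣ) : Representation ℂ G (Fin n → ℂ) :=
  Matrix.toLinAlgEquiv'.toMonoidHom.comp ((Units.coeHom _).comp ρ)

theorem toRepresentation_apply (ρ : G →* (Matrix (Fin n) (Fin n) ℂ)ˣ) (g : G) :
    toRepresentation ρ g = Matrix.toLin' (ρ g : Matrix (Fin n) (Fin n) ℂ) := rfl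

theorem character_toRepresentation (ρ : G →* (Matrix (Fin n) (Fin n) ℂ)ˣ) (g : G) :
    (toRepresentation ρ).character g = (ρ g : Matrix (Fin n) (Fin n) ℂ).trace :=
  Matrix.trace_toLin'_eq _

theorem matRepIso_iff {m : ℕ} {σ : G →* (Matrix (Fin m) (Fin m) ℂ)ˣ}
    {ρ : G →* (Matrix (Fin n) (Fin n) ℂ)ˣ} :
    MatRepIso σ ρ ↔ Nonempty ((toRepresentation σ).Equiv (toRepresentation ρ)) :=
  ⟨fun ⟨e, he⟩ => ⟨.mk e he⟩, fun ⟨φ⟩ => ⟨φ.toLinearEquiv, φ.isIntertwining'⟩⟩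

theorem _root_.MatRepIso.trace_eq {m : ℕ} {σ : G →* (Matrix (Fin m) (Fin m) ℂ)ˣ}
    {ρ : G →* (Matrix (Fin n) (Fin n) ℂ)ˣ} (h : MatRepIso σ ρ) (g : G) :
    (σ g : Matrix (Fin m) (Fin m) ℂ).trace = (ρ g : Matrix (Fin n) (Fin n) ℂ).trace := by
  rw [← character_toRepresentation, ← character_toRepresentation,
    Representation.char_iso (matRepIso_iff.1 h).some]

theorem isIrreducible_toRepresentation_iff {ρ : G →* (Matrix (Fin n) (Fin n) ℂ)ˣ} :
    (toRepresentation ρ).IsIrreducible ↔ IsIrredMatRep ρ := by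
  constructor
  · intro h
    refine ⟨Representation.IsIrreducible.finrank_pos (toRepresentation ρ) |>.trans_eq
      (finrank_fin_fun ℂ), fun W hW => ?_⟩
    rcases h.eq_bot_or_eq_top ⟨W, fun g v hv => hW g ⟨v, hv, rfl⟩⟩ with h | h
    · exact .inl (congrArg Subrepresentation.toSubmodule h)
    · exact .inr (congrArg Subrepresentation.toSubmodule h)
  · rintro ⟨hn, hirr⟩
    have : Nonempty (Fin n) := ⟨⟨0, hn⟩⟩
    exact
      { exists_pair_ne := ⟨⊥, ⊤, fun h => bot_ne_top (congrArg Subrepresentation.toSubmodule h)⟩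
        eq_bot_or_eq_top := fun W =>
          (hirr W.toSubmodule fun g => Submodule.map_le_iff_le_comap.2 fun v hv =>
            W.apply_mem_toSubmodule g hv).imp (fun h => Subrepresentation.toSubmodule_injective h)
            (fun h => Subrepresentation.toSubmodule_injective h) }

theorem isIrredMatRep_toMatRep {V : Type*} [AddCommGroup V] [Module ℂ V]
    (π : Representation ℂ G V) [π.IsIrreducible] (e : V ≃ₗ[ℂ] (Fin n → ℂ)) :
    IsIrredMatRep (π.toMatRep e) := by
  have φ : π.Equiv (toRepresentation (π.toMatRep e)) := .mk e fun g => by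
    ext v
    simp [toRepresentation_apply, Representation.toMatRep_apply, LinearEquiv.conj_apply]
  exact isIrreducible_toRepresentation_iff.1 φ.isIrreducible

theorem sum_character_mul_character_inv_eq_ite [Fintype G] {ι : Type*} [DecidableEq ι]
    {d : ι → ℕ} {ρ : ∀ i, G →* (Matrix (Fin (d i)) (Fin (d i)) ℂ)ˣ}
    (hirr : ∀ i, IsIrredMatRep (ρ i)) (hdist : ∀ i j, i ≠ j → ¬ MatRepIso (ρ i) (ρ j)) (i j : ι) :
    ∑ g, (toRepresentation (ρ i)).character g * (toRepresentation (ρ j)).character g⁻¹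
      = if i = j then (Fintype.card G : ℂ) else 0 := by
  have := fun i => isIrreducible_toRepresentation_iff.2 (hirr i)
  rw [Representation.sum_character_mul_character_inv]
  by_cases hij : i = j
  · subst hij
    rw [if_pos rfl, if_pos ⟨Representation.Equiv.refl _⟩]
  · rw [if_neg hij, if_neg (matRepIso_iff.not.1 (hdist j i (Ne.symm hij)))]

open MonoidAlgebra in
theorem exists_isIrredMatRep_sum_trace_eq_regular (G : Type) [Group G] [Fintype G]
    [DecidableEq G] :
    ∃ (κ : Type) (_ : Fintype κ) (d : κ → ℕ)
      (τ : ∀ S : κ, G →* (Matrix (Fin (d S)) (Fin (d S)) ℂ)ˣ), (∀ S, IsIrredMatRep (τ S)) ∧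
        ∀ g, ∑ S, (τ S g : Matrix (Fin (d S)) (Fin (d S)) ℂ).trace
          = if g = 1 then (Fintype.card G : ℂ) else 0 := by
  obtain ⟨s, hind, hsup, hsimple⟩ := IsSemisimpleModule.exists_sSupIndep_sSup_simples_eq_top
    (MonoidAlgebra ℂ G) (MonoidAlgebra ℂ G)
  have hint : DirectSum.IsInternal (Subtype.val : s → Submodule (MonoidAlgebra ℂ G) _) :=
    DirectSum.isInternal_submodule_of_iSupIndep_of_iSup_eq_top ((sSupIndep_iff s).1 hind)
      (by rwa [← sSup_eq_iSup'])
  have : Fintype s := @Fintype.ofFinite _ <| WellFoundedGT.finite_of_iSupIndep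
    ((sSupIndep_iff s).1 hind) fun S => Submodule.nontrivial_iff_ne_bot.1
      (have := hsimple S S.2; IsSimpleModule.nontrivial (MonoidAlgebra ℂ G) S.1)
  have hirr : ∀ S : s, (Representation.ofModule' (k := ℂ) (G := G) S.1).IsIrreducible :=
    fun S => (Representation.isIrreducible_ofModule'_iff _).2 (hsimple S S.2)
  refine ⟨s, this, fun S => finrank ℂ S.1, fun S => (Representation.ofModule' S.1).toMatRep
    (finBasis ℂ S.1).equivFun, fun S => isIrredMatRep_toMatRep _ _, fun g => ?_⟩
  simp only [Representation.trace_toMatRep]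
  have hmaps : ∀ S : s,
      Set.MapsTo (mulLeft ℂ (of ℂ G g)) (S.1.restrictScalars ℂ) (S.1.restrictScalars ℂ) :=
    fun S x hx => S.1.smul_mem (of ℂ G g) hx
  rw [← trace_mulLeft_of, trace_eq_sum_trace_restrict (N := fun S : s => S.1.restrictScalars ℂ)
    hint hmaps]
  -- `ofModule' S g` is, by definition, left multiplication by `of ℂ G g` restricted to `S`
  rfl

end MatRep

/-- Frobenius formula: for a finite group `Γ` and `n ≥ 1`, the number of tuples
`(x₁,y₁,…,xₙ,yₙ)` with `[x₁,y₁]⋯[xₙ,yₙ] = 1` equals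
`|Γ|^{2n-1} · Σ_{π ∈ Irr(Γ)} (dim π)^{-(2n-2)}`, where `Irr(Γ)` is (parametrized by) a complete
family of pairwise non-isomorphic irreducible representations. -/
theorem stmt_1 (Γ : Type) [Group Γ] [Fintype Γ] (n : ℕ) (hn : 1 ≤ n)
    (ι : Type) [Fintype ι] (d : ι → ℕ)
    (ρ : ∀ i : ι, Γ →* (Matrix (Fin (d i)) (Fin (d i)) ℂ)ˣ)
    (hirr : ∀ i, IsIrredMatRep (ρ i))
    (hdist : ∀ i j, i ≠ j → ¬ MatRepIso (ρ i) (ρ j))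
    (hexh : ∀ (m : ℕ) (σ : Γ →* (Matrix (Fin m) (Fin m) ℂ)ˣ),
      IsIrredMatRep σ → ∃ i, MatRepIso σ (ρ i)) :
    (Nat.card {t : Fin n → Γ × Γ //
        (List.ofFn (fun k : Fin n => ⁅(t k).1, (t k).2⁆)).prod = 1} : ℝ)
      = (Fintype.card Γ : ℝ) ^ (2 * n - 1) * ∑ i : ι, ((d i : ℝ) ^ (2 * n - 2))⁻¹ := by
  classical
  have := fun i => MatRep.isIrreducible_toRepresentation_iff.2 (hirr i)
  obtain ⟨κ, _, _, τ, hτ, hτreg⟩ := MatRep.exists_isIrredMatRep_sum_trace_eq_regular Γ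
  choose c hc using fun S => hexh _ (τ S) (hτ S)
  have hcol := sum_apply_one_mul_eq_of_orthogonal
    (MatRep.sum_character_mul_character_inv_eq_ite hirr hdist) c fun g => by
      simpa only [MatRep.character_toRepresentation, (hc _).trace_eq] using hτreg g
  have key := card_prod_commutators_eq_one (fun i => MatRep.toRepresentation (ρ i))
    (fun g => by simpa [Representation.char_one] using hcol g) hn
  simp only [finrank_fin_fun] at key
  apply Complex.ofReal_injective
  push_cast
  exact key
end

section
/- Let f(s) be a Dirichlet series Σ_{n≥0} aₙ p^{-ns} (p a fixed prime) with real coefficients satisfying 1/C < aₙ < C for n > C, which agrees on its domain of absolute convergence with a rational function R of p^{-s}. Then s = 0 is a simple pole of R (viewed as a function of s). -/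
open Polynomial Filter Topology Set Asymptotics

/- Substituting x = p^{-s} turns f into the power series ∑ aₙ xⁿ on (0, 1). As the aₙ are
eventually pinched between 1/C and C, comparison with the geometric series keeps (1 - x) f(x)
between two positive constants as x → 1⁻. Writing (1 - X) R = P / Q in lowest terms,
P(x) = (1 - x) f(x) Q(x) near 1⁻, so P and Q vanish at 1 together; being coprime, neither does. -/

theorem RatFunc.num_algebraMap_mul_mul_denom {K : Type*} [Field K] (q : K[X]) (R : RatFunc K) :
    (algebraMap K[X] (RatFunc K) q * R).num * R.denom =
      q * R.num * (algebraMap K[X] (RatFunc K) q * R).denom :=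
  (RatFunc.num_mul_eq_mul_denom_iff R.denom_ne_zero).2 <| by
    rw [map_mul, mul_div_assoc, RatFunc.num_div_denom]

theorem Polynomial.eval_ne_zero_of_isCoprime_of_isTheta {𝕜 : Type*} [NormedField 𝕜]
    {P Q : 𝕜[X]} (hPQ : IsCoprime P Q) {l : Filter 𝕜} [l.NeBot] {x₀ : 𝕜} (hl : l ≤ 𝓝 x₀)
    (hΘ : (fun x => P.eval x) =Θ[l] fun x => Q.eval x) :
    P.eval x₀ ≠ 0 ∧ Q.eval x₀ ≠ 0 := by
  have tendsto_zero_iff (S : 𝕜[X]) : Tendsto (fun x => S.eval x) l (𝓝 0) ↔ S.eval x₀ = 0 := by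
    have hS : Tendsto (fun x => S.eval x) l (𝓝 (S.eval x₀)) :=
      S.continuous.continuousAt.mono_left hl
    exact ⟨tendsto_nhds_unique hS, fun h => h ▸ hS⟩
  have hzero : P.eval x₀ = 0 ↔ Q.eval x₀ = 0 := by
    rw [← tendsto_zero_iff, ← tendsto_zero_iff, hΘ.tendsto_zero_iff]
  have hcommon := aeval_ne_zero_of_isCoprime hPQ x₀
  simp only [coe_aeval_eq_eval] at hcommon
  tauto

theorem isTheta_one_of_eventually_bounds {α : Type*} {l : Filter α} {F : α → ℝ} {m M : ℝ}
    (hm : 0 < m) (hF : ∀ᶠ x in l, m < F x ∧ F x < M) : F =Θ[l] fun _ => (1 : ℝ) := by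
  refine ⟨IsBigO.of_bound M ?_, (isBigO_const_left_iff_pos_le_norm one_ne_zero).2 ⟨m, hm, ?_⟩⟩
  all_goals filter_upwards [hF] with x hx
  · rw [norm_one, mul_one, Real.norm_of_nonneg (by linarith)]; exact hx.2.le
  · rw [Real.norm_of_nonneg (by linarith)]; exact hx.1.le

theorem exists_rpow_neg_eq {b x : ℝ} (hb : 1 < b) (hx : x ∈ Ioo 0 1) :
    ∃ s : ℝ, 0 < s ∧ b ^ (-s) = x ∧ ∀ n : ℕ, b ^ (-(n : ℝ) * s) = x ^ n := by
  have hb0 : 0 < b := by linarith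
  have hbx : b ^ Real.logb b x = x := Real.rpow_logb hb0 hb.ne' hx.1
  refine ⟨-Real.logb b x, neg_pos.2 (Real.logb_neg hb hx.1 hx.2), by rw [neg_neg, hbx], fun n => ?_⟩
  rw [show -(n : ℝ) * -Real.logb b x = Real.logb b x * n by ring, Real.rpow_mul hb0.le, hbx,
    Real.rpow_natCast]

theorem one_sub_mul_tail_mem_Icc {a : ℕ → ℝ} {m M : ℝ} {N : ℕ}
    (ha : ∀ n ≥ N, m ≤ a n ∧ a n ≤ M) {x L : ℝ} (hx₀ : 0 ≤ x) (hx₁ : x < 1)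
    (hL : HasSum (fun n => a n * x ^ n) L) :
    (1 - x) * (L - ∑ n ∈ Finset.range N, a n * x ^ n) ∈ Icc (m * x ^ N) (M * x ^ N) := by
  have htail : HasSum (fun k => a (k + N) * x ^ (k + N)) (L - ∑ n ∈ Finset.range N, a n * x ^ n) :=
    (hasSum_nat_add_iff' N).2 hL
  have hgeom (c : ℝ) : HasSum (fun k => c * x ^ N * x ^ k) (c * x ^ N / (1 - x)) :=
    (hasSum_geometric_of_lt_one hx₀ hx₁).mul_left _
  have hterm (c : ℝ) (k : ℕ) : c * x ^ N * x ^ k = c * x ^ (k + N) := by ring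
  have h1x : 0 < 1 - x := sub_pos.2 hx₁
  constructor
  · refine (div_le_iff₀' h1x).1 (hasSum_le (fun k => ?_) (hgeom m) htail)
    rw [hterm]
    exact mul_le_mul_of_nonneg_right (ha _ (Nat.le_add_left N k)).1 (pow_nonneg hx₀ _)
  · refine (le_div_iff₀' h1x).1 (hasSum_le (fun k => ?_) htail (hgeom M))
    rw [hterm]
    exact mul_le_mul_of_nonneg_right (ha _ (Nat.le_add_left N k)).2 (pow_nonneg hx₀ _)

theorem eventually_lt_one_sub_mul_lt_of_hasSum {a : ℕ → ℝ} {m M m' M' : ℝ}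
    (ha : ∀ᶠ n in atTop, m ≤ a n ∧ a n ≤ M) {L : ℝ → ℝ}
    (hL : ∀ x ∈ Ioo (0 : ℝ) 1, HasSum (fun n => a n * x ^ n) (L x)) (hm : m' < m) (hM : M < M') :
    ∀ᶠ x in 𝓝[<] 1, m' < (1 - x) * L x ∧ (1 - x) * L x < M' := by
  obtain ⟨N, hN⟩ := eventually_atTop.1 ha
  have hlim (c : ℝ) : Tendsto (fun x : ℝ => (1 - x) * ∑ n ∈ Finset.range N, a n * x ^ n + c * x ^ N)
      (𝓝 1) (𝓝 c) := by
    have hcont : Continuous fun x : ℝ =>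
        (1 - x) * ∑ n ∈ Finset.range N, a n * x ^ n + c * x ^ N := by fun_prop
    simpa using hcont.tendsto 1
  filter_upwards [((hlim m).eventually_const_lt hm).filter_mono nhdsWithin_le_nhds,
    ((hlim M).eventually_lt_const hM).filter_mono nhdsWithin_le_nhds,
    Ioo_mem_nhdsLT one_pos] with x hlo hhi hx
  obtain ⟨h₁, h₂⟩ := one_sub_mul_tail_mem_Icc hN hx.1.le hx.2 (hL x hx)
  rw [mul_sub] at h₁ h₂
  constructor <;> linarith

/-- Let `f(s) = Σ_{n≥0} aₙ p^{-ns}` with `1/C < aₙ < C` for `n > C`, and suppose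
`f` agrees on `s > 0` with a rational function `R` of `p^{-s}` (in lowest terms `num/denom`,
with the denominator nonvanishing there).  Then `s = 0` is a simple pole of `R`:
`(1 - T)·R(T)` is regular and nonzero at `T = 1`, i.e. its (coprime) numerator and denominator
are both nonvanishing at `1`. -/
theorem stmt_18 (p : ℕ) (hp : p.Prime) (C : ℝ) (hC : 0 < C) (a : ℕ → ℝ)
    (ha : ∀ n : ℕ, C < (n : ℝ) → 1 / C < a n ∧ a n < C) (R : RatFunc ℝ)
    (hR : ∀ s : ℝ, 0 < s →
      Polynomial.eval ((p : ℝ) ^ (-s)) R.denom ≠ 0 ∧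
      HasSum (fun n : ℕ => a n * (p : ℝ) ^ (-(n : ℝ) * s))
        (Polynomial.eval ((p : ℝ) ^ (-s)) R.num / Polynomial.eval ((p : ℝ) ^ (-s)) R.denom)) :
    Polynomial.eval (1 : ℝ) ((1 - RatFunc.X) * R).denom ≠ 0 ∧
    Polynomial.eval (1 : ℝ) ((1 - RatFunc.X) * R).num ≠ 0 := by
  have hseries : ∀ x ∈ Ioo (0 : ℝ) 1, R.denom.eval x ≠ 0 ∧
      HasSum (fun n => a n * x ^ n) (R.num.eval x / R.denom.eval x) := by
    intro x hx
    obtain ⟨s, hs, hsx, hpow⟩ := exists_rpow_neg_eq (b := p) (by exact_mod_cast hp.one_lt) hx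
    simpa only [hsx, hpow] using hR s hs
  have ha' : ∀ᶠ n in atTop, 1 / C ≤ a n ∧ a n ≤ C :=
    (tendsto_natCast_atTop_atTop.eventually_gt_atTop C).mono fun n hn =>
      (ha n hn).imp le_of_lt le_of_lt
  set F : ℝ → ℝ := fun x => (1 - x) * (R.num.eval x / R.denom.eval x)
  have hF : F =Θ[𝓝[<] 1] fun _ => (1 : ℝ) :=
    isTheta_one_of_eventually_bounds (by positivity) <| eventually_lt_one_sub_mul_lt_of_hasSum ha'
      (fun x hx => (hseries x hx).2) (half_lt_self (by positivity)) (lt_add_one C)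
  set S := (1 - RatFunc.X) * R
  have hS : S = algebraMap ℝ[X] (RatFunc ℝ) (1 - X) * R := by simp [S]
  have hnum : (fun x => S.num.eval x) =ᶠ[𝓝[<] 1] fun x => F x * S.denom.eval x := by
    filter_upwards [Ioo_mem_nhdsLT one_pos] with x hx
    have hcross := congrArg (eval x) (hS ▸ RatFunc.num_algebraMap_mul_mul_denom (1 - X) R)
    simp only [eval_mul, eval_sub, eval_one, eval_X] at hcross
    simp only [F]
    field_simp [(hseries x hx).1]
    linear_combination hcross
  have hΘ : (fun x => S.num.eval x) =Θ[𝓝[<] 1] fun x => S.denom.eval x := by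
    simpa using hnum.trans_isTheta (hF.mul (isTheta_refl (fun x => S.denom.eval x) _))
  exact (eval_ne_zero_of_isCoprime_of_isTheta (RatFunc.isCoprime_num_denom S)
    nhdsWithin_le_nhds hΘ).symm
end
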